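/- arXiv:2312.16768 — 3 statements merged into one kernel-verified Lean document; each statement's English description precedes it below -/
import Mathlib

section
/- Let q₁ > 0, q₂ > 0, T > 0, α₀ > 0, α₂ > 0, d₀ > 0 be real numbers and h_u < h_B real numbers. Define y₂(h) = q₁·(d₀² + (h − h_B)²)^(−α₀/2) − (q₂ + T·(h − h_u)²)^(α₂/2). Then y₂ is antitone (monotonically nonincreasing) on the interval [h_B, ∞): for all h_B ≤ h ≤ h′, y₂(h′) ≤ y₂(h). -/
/-- The RIS-height objective y₂ is nonincreasing on [h_B, ∞). -/
theorem stmt_5 (q₁ q₂ T α₀ α₂ d₀ hu hB : ℝ)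
    (hq₁ : 0 < q₁) (hq₂ : 0 < q₂) (hT : 0 < T) (hα₀ : 0 < α₀) (hα₂ : 0 < α₂)
    (hd₀ : 0 < d₀) (hub : hu < hB) :
    AntitoneOn (fun h : ℝ =>
      q₁ * (d₀ ^ 2 + (h - hB) ^ 2) ^ (-α₀ / 2 : ℝ) -
        (q₂ + T * (h - hu) ^ 2) ^ (α₂ / 2 : ℝ)) (Set.Ici hB) := by
  intro a ha b hb hab
  simp only [Set.mem_Ici] at ha hb
  have hAa : (0:ℝ) < d₀ ^ 2 + (a - hB) ^ 2 := by positivity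
  have hAab : d₀ ^ 2 + (a - hB) ^ 2 ≤ d₀ ^ 2 + (b - hB) ^ 2 := by nlinarith
  have hsq : (a - hu) ^ 2 ≤ (b - hu) ^ 2 := by nlinarith
  have hBab : q₂ + T * (a - hu) ^ 2 ≤ q₂ + T * (b - hu) ^ 2 := by
    nlinarith [mul_le_mul_of_nonneg_left hsq hT.le]
  have h1 : (d₀ ^ 2 + (b - hB) ^ 2) ^ (-α₀ / 2 : ℝ) ≤ (d₀ ^ 2 + (a - hB) ^ 2) ^ (-α₀ / 2 : ℝ) :=
    Real.rpow_le_rpow_of_nonpos hAa hAab (by linarith)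
  have h2 : (q₂ + T * (a - hu) ^ 2) ^ (α₂ / 2 : ℝ) ≤ (q₂ + T * (b - hu) ^ 2) ^ (α₂ / 2 : ℝ) :=
    Real.rpow_le_rpow (by positivity) hBab (by linarith)
  have := mul_le_mul_of_nonneg_left h1 hq₁.le
  dsimp only
  linarith
end

section
/- Let q₁ > 0, q₂ > 0, T > 0, α₀ > 0, α₂ > 0, d₀ > 0 be real numbers and h_u < h_B real numbers. Define y₂(h) = q₁·(d₀² + (h − h_B)²)^(−α₀/2) − (q₂ + T·(h − h_u)²)^(α₂/2). Then y₂ is monotone (nondecreasing) on the interval (−∞, h_u]: for all h ≤ h′ ≤ h_u, y₂(h) ≤ y₂(h′). -/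
/-- The RIS-height objective y₂ is nondecreasing on (−∞, h_u]. -/
theorem stmt_6 (q₁ q₂ T α₀ α₂ d₀ hu hB : ℝ)
    (hq₁ : 0 < q₁) (hq₂ : 0 < q₂) (hT : 0 < T) (hα₀ : 0 < α₀) (hα₂ : 0 < α₂)
    (hd₀ : 0 < d₀) (hub : hu < hB) :
    MonotoneOn (fun h : ℝ =>
      q₁ * (d₀ ^ 2 + (h - hB) ^ 2) ^ (-α₀ / 2 : ℝ) -
        (q₂ + T * (h - hu) ^ 2) ^ (α₂ / 2 : ℝ)) (Set.Iic hu) := by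
  intro a ha b hb hab
  simp only [Set.mem_Iic] at ha hb
  have pos1 : (0:ℝ) < d₀^2 + (b - hB)^2 := by positivity
  have pos2 : (0:ℝ) ≤ q₂ + T*(b-hu)^2 := by positivity
  have t1 : (d₀^2 + (a-hB)^2) ^ (-α₀/2 : ℝ) ≤ (d₀^2 + (b-hB)^2) ^ (-α₀/2 : ℝ) :=
    Real.rpow_le_rpow_of_nonpos pos1 (by nlinarith) (by linarith)
  have t2 : (q₂ + T*(b-hu)^2) ^ (α₂/2 : ℝ) ≤ (q₂ + T*(a-hu)^2) ^ (α₂/2 : ℝ) :=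
    Real.rpow_le_rpow pos2 (by
      have h2 : (b-hu)^2 ≤ (a-hu)^2 := by nlinarith
      nlinarith [mul_le_mul_of_nonneg_left h2 hT.le]) (by linarith)
  have := mul_le_mul_of_nonneg_left t1 hq₁.le
  simp only []
  linarith
end

section
/- Let q₁ > 0, q₂ > 0, T > 0, α₀ > 0, α₂ > 0, d₀ > 0 be real numbers and h_u < h_B real numbers. Define y₂(h) = q₁·(d₀² + (h − h_B)²)^(−α₀/2) − (q₂ + T·(h − h_u)²)^(α₂/2). Then there exists h* ∈ [h_u, h_B] such that y₂(h) ≤ y₂(h*) for all real h, i.e. the optimal RIS height lies in the interval [h_u, h_B]. -/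
/-- The optimal RIS height lies between the user height and the BS height. -/
theorem stmt_7 (q₁ q₂ T α₀ α₂ d₀ hu hB : ℝ)
    (hq₁ : 0 < q₁) (hq₂ : 0 < q₂) (hT : 0 < T) (hα₀ : 0 < α₀) (hα₂ : 0 < α₂)
    (hd₀ : 0 < d₀) (hub : hu < hB) :
    ∃ hstar ∈ Set.Icc hu hB, ∀ h : ℝ,
      q₁ * (d₀ ^ 2 + (h - hB) ^ 2) ^ (-α₀ / 2 : ℝ) -
          (q₂ + T * (h - hu) ^ 2) ^ (α₂ / 2 : ℝ) ≤
        q₁ * (d₀ ^ 2 + (hstar - hB) ^ 2) ^ (-α₀ / 2 : ℝ) -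
          (q₂ + T * (hstar - hu) ^ 2) ^ (α₂ / 2 : ℝ) := by
  set f : ℝ → ℝ := fun h =>
    q₁ * (d₀ ^ 2 + (h - hB) ^ 2) ^ (-α₀ / 2 : ℝ) -
      (q₂ + T * (h - hu) ^ 2) ^ (α₂ / 2 : ℝ) with hf
  have hpos1 : ∀ h : ℝ, (0 : ℝ) < d₀ ^ 2 + (h - hB) ^ 2 := fun h =>
    lt_add_of_lt_of_nonneg (pow_pos hd₀ 2) (sq_nonneg _)
  have hpos2 : ∀ h : ℝ, (0 : ℝ) < q₂ + T * (h - hu) ^ 2 := fun h =>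
    lt_add_of_lt_of_nonneg hq₂ (mul_nonneg hT.le (sq_nonneg _))
  -- monotone comparison: if a is "closer" to both hB and hu than b, then f b ≤ f a
  have key : ∀ a b : ℝ, (a - hB) ^ 2 ≤ (b - hB) ^ 2 → (a - hu) ^ 2 ≤ (b - hu) ^ 2 →
      f b ≤ f a := by
    intro a b h1 h2
    apply sub_le_sub
    · apply mul_le_mul_of_nonneg_left _ hq₁.le
      rw [div_eq_mul_inv, neg_mul, Real.rpow_neg (hpos1 b).le,
        Real.rpow_neg (hpos1 a).le]
      apply inv_anti₀ (Real.rpow_pos_of_pos (hpos1 a) _)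
      exact Real.rpow_le_rpow (hpos1 a).le (by linarith)
        (by positivity)
    · exact Real.rpow_le_rpow (hpos2 a).le (by nlinarith [hT.le]) (by positivity)
  -- continuity
  have hcont : ContinuousOn f (Set.Icc hu hB) := by
    apply ContinuousOn.sub
    · apply ContinuousOn.mul continuousOn_const
      apply ContinuousOn.rpow_const
      · fun_prop
      · intro x _; left; exact (hpos1 x).ne'
    · apply ContinuousOn.rpow_const
      · fun_prop
      · intro x _; left; exact (hpos2 x).ne'
  obtain ⟨hstar, hmem, hmax⟩ :=
    (isCompact_Icc : IsCompact (Set.Icc hu hB)).exists_isMaxOn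
      (Set.nonempty_Icc.mpr hub.le) hcont
  refine ⟨hstar, hmem, fun h => ?_⟩
  rcases le_total h hu with hle | hge
  · calc f h ≤ f hu := key hu h (by nlinarith) (by nlinarith)
      _ ≤ f hstar := hmax (Set.left_mem_Icc.mpr hub.le)
  · rcases le_total h hB with hle2 | hge2
    · exact hmax ⟨hge, hle2⟩
    · calc f h ≤ f hB := key hB h (by nlinarith) (by nlinarith)
        _ ≤ f hstar := hmax (Set.right_mem_Icc.mpr hub.le)
end
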